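/- arXiv:2509.16776 — 2 statements merged into one kernel-verified Lean document; each statement's English description precedes it below -/
import Mathlib

section
/- Let γ be the standard Gaussian measure on ℝ (gaussianReal 0 1), let g : ℝ → ℝ be differentiable with derivative g′ that is L-Lipschitz, let θ ∈ ℝ, and let μ > 0. Then the Gaussian-smoothed two-point gradient estimate satisfies the bias bound |∫ u, ((g(θ + μ·u) − g(θ − μ·u)) / (2μ)) · u ∂γ − g′(θ)| ≤ (L·μ/2) · ∫ u, |u|³ ∂γ. -/
/-!
Write `h = μu`. A Lipschitz derivative gives the sharp first-order Taylor bound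
`|g (x + h) - g x - h g' x| ≤ L h² / 2` (integrate `g' (x + s h) - g' x` over `s ∈ [0, 1]`),
so the symmetric difference deviates from `2 h g' θ` by at most `L h²`. Dividing by `2μ` and
multiplying by `u`, the estimator deviates from `g' θ u²` by at most `L μ |u|³ / 2`;
integrating against the standard Gaussian, whose second moment is `1`, gives the bias bound.
-/

open MeasureTheory ProbabilityTheory
open scoped NNReal

theorem norm_sub_sub_smul_le_of_lipschitzWith_deriv {E : Type*} [NormedAddCommGroup E]
    [NormedSpace ℝ E] [CompleteSpace E] {g g' : ℝ → E} {K : ℝ≥0}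
    (hg : ∀ x, HasDerivAt g (g' x) x) (hK : LipschitzWith K g') (x h : ℝ) :
    ‖g (x + h) - g x - h • g' x‖ ≤ K / 2 * h ^ 2 := by
  have hderiv : ∀ s : ℝ, HasDerivAt (fun s => g (x + s * h) - s • h • g' x)
      (h • (g' (x + s * h) - g' x)) s := by
    intro s
    have hline : HasDerivAt (fun s : ℝ => x + s * h) h s := by
      simpa using ((hasDerivAt_id s).mul_const h).const_add x
    exact ((hg _).scomp s hline |>.sub ((hasDerivAt_id s).smul_const (h • g' x))).congr_deriv
      (by simp [smul_sub])
  have hcont : Continuous fun s : ℝ => h • (g' (x + s * h) - g' x) := by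
    have := hK.continuous; fun_prop
  have hftc := intervalIntegral.integral_eq_sub_of_hasDerivAt (fun s _ => hderiv s)
    (hcont.intervalIntegrable 0 1)
  have hbound : ∀ s ∈ Set.Ioc (0 : ℝ) 1, ‖h • (g' (x + s * h) - g' x)‖ ≤ K * h ^ 2 * s := by
    intro s hs
    calc ‖h • (g' (x + s * h) - g' x)‖ ≤ |h| * (K * |s * h|) := by
          rw [norm_smul, Real.norm_eq_abs]
          gcongr
          simpa [dist_eq_norm, Real.dist_eq] using hK.dist_le_mul (x + s * h) x
      _ = K * h ^ 2 * s := by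
          rw [abs_mul, abs_of_pos hs.1, ← sq_abs h]; ring
  calc ‖g (x + h) - g x - h • g' x‖
      = ‖∫ s in (0 : ℝ)..1, h • (g' (x + s * h) - g' x)‖ := by
        rw [hftc]; simp [sub_right_comm]
    _ ≤ ∫ s in (0 : ℝ)..1, K * h ^ 2 * s :=
        intervalIntegral.norm_integral_le_of_norm_le zero_le_one
          (Filter.Eventually.of_forall hbound) ((continuous_const_mul _).intervalIntegrable 0 1)
    _ = K / 2 * h ^ 2 := by
        rw [intervalIntegral.integral_const_mul, integral_id]; ring

theorem norm_sub_sub_two_mul_smul_le_of_lipschitzWith_deriv {E : Type*} [NormedAddCommGroup E]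
    [NormedSpace ℝ E] [CompleteSpace E] {g g' : ℝ → E} {K : ℝ≥0}
    (hg : ∀ x, HasDerivAt g (g' x) x) (hK : LipschitzWith K g') (x h : ℝ) :
    ‖g (x + h) - g (x - h) - (2 * h) • g' x‖ ≤ K * h ^ 2 := by
  have hplus := norm_sub_sub_smul_le_of_lipschitzWith_deriv hg hK x h
  have hminus := norm_sub_sub_smul_le_of_lipschitzWith_deriv hg hK x (-h)
  calc ‖g (x + h) - g (x - h) - (2 * h) • g' x‖
      = ‖(g (x + h) - g x - h • g' x) - (g (x + -h) - g x - (-h) • g' x)‖ := by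
        congr 1; rw [← sub_eq_add_neg, two_mul, add_smul, neg_smul]; abel
    _ ≤ K / 2 * h ^ 2 + K / 2 * (-h) ^ 2 := (norm_sub_le _ _).trans (add_le_add hplus hminus)
    _ = K * h ^ 2 := by ring

noncomputable def twoPointEstimate (g : ℝ → ℝ) (θ μ u : ℝ) : ℝ :=
  (g (θ + μ * u) - g (θ - μ * u)) / (2 * μ) * u

theorem abs_twoPointEstimate_sub_le {g g' : ℝ → ℝ} {K : ℝ≥0}
    (hg : ∀ x, HasDerivAt g (g' x) x) (hK : LipschitzWith K g') (θ : ℝ) {μ : ℝ} (hμ : μ ≠ 0)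
    (u : ℝ) : |twoPointEstimate g θ μ u - g' θ * u ^ 2| ≤ K * |μ| / 2 * |u| ^ 3 := by
  have hsym := norm_sub_sub_two_mul_smul_le_of_lipschitzWith_deriv hg hK θ (μ * u)
  rw [Real.norm_eq_abs, smul_eq_mul] at hsym
  have hrepr : twoPointEstimate g θ μ u - g' θ * u ^ 2
      = (g (θ + μ * u) - g (θ - μ * u) - 2 * (μ * u) * g' θ) * u / (2 * μ) := by
    unfold twoPointEstimate; field_simp
  rw [hrepr, abs_div, abs_mul, abs_mul, abs_two, div_le_iff₀ (by positivity)]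
  calc |g (θ + μ * u) - g (θ - μ * u) - 2 * (μ * u) * g' θ| * |u|
      ≤ K * (μ * u) ^ 2 * |u| := by gcongr
    _ = K * |μ| / 2 * |u| ^ 3 * (2 * |μ|) := by
        rw [mul_pow, ← sq_abs μ, ← sq_abs u]; ring

theorem continuous_twoPointEstimate {g : ℝ → ℝ} (hg : Continuous g) (θ μ : ℝ) :
    Continuous (twoPointEstimate g θ μ) := by
  unfold twoPointEstimate; fun_prop

theorem abs_integral_twoPointEstimate_sub_le {g g' : ℝ → ℝ} {K : ℝ≥0} {ν : Measure ℝ}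
    (hg : ∀ x, HasDerivAt g (g' x) x) (hK : LipschitzWith K g') (θ : ℝ) {μ : ℝ} (hμ : μ ≠ 0)
    (h2 : Integrable (fun u => u ^ 2) ν) (h3 : Integrable (fun u => |u| ^ 3) ν) :
    |∫ u, twoPointEstimate g θ μ u ∂ν - g' θ * ∫ u, u ^ 2 ∂ν|
      ≤ K * |μ| / 2 * ∫ u, |u| ^ 3 ∂ν := by
  have hpt := abs_twoPointEstimate_sub_le hg hK θ hμ
  have hcont : Continuous (twoPointEstimate g θ μ) :=
    continuous_twoPointEstimate (continuous_iff_continuousAt.2 fun x => (hg x).continuousAt) θ μ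
  have hdiff : Integrable (fun u => twoPointEstimate g θ μ u - g' θ * u ^ 2) ν :=
    (h3.const_mul _).mono' (by fun_prop) (Filter.Eventually.of_forall hpt)
  have hest : Integrable (twoPointEstimate g θ μ) ν := by
    refine (hdiff.add (h2.const_mul (g' θ))).congr (Filter.Eventually.of_forall fun u => ?_)
    simp
  calc |∫ u, twoPointEstimate g θ μ u ∂ν - g' θ * ∫ u, u ^ 2 ∂ν|
      = |∫ u, (twoPointEstimate g θ μ u - g' θ * u ^ 2) ∂ν| := by
        rw [integral_sub hest (h2.const_mul _), integral_const_mul]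
    _ ≤ ∫ u, |twoPointEstimate g θ μ u - g' θ * u ^ 2| ∂ν := abs_integral_le_integral_abs
    _ ≤ ∫ u, K * |μ| / 2 * |u| ^ 3 ∂ν := integral_mono hdiff.abs (h3.const_mul _) hpt
    _ = K * |μ| / 2 * ∫ u, |u| ^ 3 ∂ν := integral_const_mul _ _

theorem integrable_abs_pow_gaussianReal (m : ℝ) (v : ℝ≥0) (n : ℕ) :
    Integrable (fun u => |u| ^ n) (gaussianReal m v) := by
  rcases n.eq_zero_or_pos with rfl | hn
  · simp
  · simpa using (memLp_id_gaussianReal (μ := m) (v := v) n).integrable_norm_pow hn.ne'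

theorem integral_sq_gaussianReal (v : ℝ≥0) : ∫ u, u ^ 2 ∂gaussianReal 0 v = v := by
  rw [← variance_of_integral_eq_zero (X := fun u => u) measurable_id.aemeasurable
    integral_id_gaussianReal, variance_fun_id_gaussianReal]

theorem stmt_12_general (g g' : ℝ → ℝ) (L : ℝ)
    (hg : ∀ x, HasDerivAt g (g' x) x)
    (hlip : ∀ x y, |g' x - g' y| ≤ L * |x - y|)
    (θ μ : ℝ) (hμ : 0 < μ) :
    |(∫ u, ((g (θ + μ * u) - g (θ - μ * u)) / (2 * μ)) * u ∂(gaussianReal 0 1)) - g' θ| ≤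
      (L * μ / 2) * ∫ u, |u| ^ 3 ∂(gaussianReal 0 1) := by
  have hL : 0 ≤ L := by simpa using (abs_nonneg _).trans (hlip 1 0)
  have hK : LipschitzWith L.toNNReal g' := LipschitzWith.of_dist_le' fun x y => hlip x y
  have h2 : Integrable (fun u => u ^ 2) (gaussianReal 0 1) := by
    simpa using integrable_abs_pow_gaussianReal 0 1 2
  have hbias := abs_integral_twoPointEstimate_sub_le hg hK θ hμ.ne' h2
    (integrable_abs_pow_gaussianReal 0 1 3)
  rwa [integral_sq_gaussianReal, NNReal.coe_one, mul_one, Real.coe_toNNReal _ hL,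
    abs_of_pos hμ] at hbias

/-- Bias bound for the Gaussian-smoothed two-point gradient estimate of a
Lipschitz-smooth scalar function. -/
theorem stmt_12 (g g' : ℝ → ℝ) (L : ℝ) (hL : 0 ≤ L)
    (hg : ∀ x, HasDerivAt g (g' x) x)
    (hlip : ∀ x y, |g' x - g' y| ≤ L * |x - y|)
    (θ μ : ℝ) (hμ : 0 < μ) :
    |(∫ u, ((g (θ + μ * u) - g (θ - μ * u)) / (2 * μ)) * u ∂(gaussianReal 0 1)) - g' θ| ≤
      (L * μ / 2) * ∫ u, |u| ^ 3 ∂(gaussianReal 0 1) :=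
  stmt_12_general g g' L hg hlip θ μ hμ
end

section
/- Fix a positive integer K, a : Fin K → ℂ, σ > 0, and k : Fin K. With MSE(u) = |1 − (conj u)·(a k)|² + ∑_{j ≠ k} |(conj u)·(a j)|² + σ²·|u|² and SINR = |a k|² / (∑_{j ≠ k} |a j|² + σ²), the achievable rate admits the variational representation Real.log (1 + SINR) = ⨆_{u ∈ ℂ} ⨆_{w > 0} (Real.log w − w·MSE(u) + 1); moreover the supremum is attained at u* = (a k)/(∑_j |a j|² + σ²) and w* = 1/MSE(u*). -/
/-! Completing the square gives `MSE u = T ‖u - u*‖² + Q / T`, where `Q` is interference plus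
noise and `T = |a k|² + Q`, so the MMSE is `Q / T = 1 / (1 + SINR)`, attained at `u*`.
For fixed `u`, concavity of `log` gives `sup_{w > 0} (log w - w e + 1) = -log e`, attained at
`w = 1 / e`; taking the supremum over `u` leaves `-log (Q / T) = log (1 + SINR)`. -/

open Real Set ComplexConjugate

namespace Real

theorem log_one_div_sub_one_div_mul_add_one {e : ℝ} (he : e ≠ 0) :
    log (1 / e) - 1 / e * e + 1 = -log e := by
  rw [one_div_mul_cancel he, one_div, log_inv]
  ring

theorem log_sub_mul_add_one_le_neg_log {w e : ℝ} (hw : 0 < w) (he : 0 < e) :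
    log w - w * e + 1 ≤ -log e := by
  have := log_le_sub_one_of_pos (mul_pos hw he)
  rw [log_mul hw.ne' he.ne'] at this
  linarith

theorem iSup_log_sub_mul_add_one {e : ℝ} (he : 0 < e) :
    ⨆ w : Ioi (0 : ℝ), (log w - (w : ℝ) * e + 1) = -log e :=
  ciSup_eq_of_forall_le_of_forall_lt_exists_gt (fun w ↦ log_sub_mul_add_one_le_neg_log w.2 he)
    fun _ hb ↦ ⟨⟨1 / e, one_div_pos.2 he⟩,
      hb.trans_eq (log_one_div_sub_one_div_mul_add_one he.ne').symm⟩

theorem iSup_iSup_log_sub_mul_add_one_of_forall_le {α : Type*} {f : α → ℝ} {x₀ : α}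
    (h₀ : 0 < f x₀) (hmin : ∀ x, f x₀ ≤ f x) :
    ⨆ x, ⨆ w : Ioi (0 : ℝ), (log w - (w : ℝ) * f x + 1) = -log (f x₀) := by
  have : Nonempty α := ⟨x₀⟩
  simp_rw [fun x ↦ iSup_log_sub_mul_add_one (h₀.trans_le (hmin x))]
  exact ciSup_eq_of_forall_le_of_forall_lt_exists_gt
    (fun x ↦ neg_le_neg (log_le_log h₀ (hmin x))) fun _ hb ↦ ⟨x₀, hb⟩

theorem log_one_add_div {s Q : ℝ} (hQ : 0 < Q) :
    log (1 + s / Q) = -log (Q / (s + Q)) := by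
  rw [← log_inv, inv_div, add_div, div_self hQ.ne', add_comm]

end Real

namespace Complex

theorem norm_one_sub_conj_mul_sq_add_mul_norm_sq (c u : ℂ) {Q : ℝ} (hT : ‖c‖ ^ 2 + Q ≠ 0) :
    ‖1 - conj u * c‖ ^ 2 + Q * ‖u‖ ^ 2 =
      (‖c‖ ^ 2 + Q) * ‖u - c / ((‖c‖ ^ 2 + Q : ℝ) : ℂ)‖ ^ 2 + Q / (‖c‖ ^ 2 + Q) := by
  simp only [Complex.sq_norm, normSq_sub, normSq_ofReal, map_div₀, conj_ofReal, map_mul, conj_conj,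
    normSq_conj, normSq_one, one_mul, mul_div_assoc', div_ofReal_re] at hT ⊢
  field_simp
  ring

end Complex

theorem stmt_15_general (K : ℕ) (a : Fin K → ℂ) (σ : ℝ) (hσ : 0 < σ) (k : Fin K)
    (MSE : ℂ → ℝ)
    (hMSE : ∀ u : ℂ, MSE u =
      ‖1 - (starRingEnd ℂ u) * a k‖ ^ 2 +
        (∑ j ∈ Finset.univ.erase k, ‖(starRingEnd ℂ u) * a j‖ ^ 2) +
        σ ^ 2 * ‖u‖ ^ 2)
    (SINR : ℝ)
    (hSINR : SINR =
      ‖a k‖ ^ 2 / ((∑ j ∈ Finset.univ.erase k, ‖a j‖ ^ 2) + σ ^ 2))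
    (ustar : ℂ)
    (hustar : ustar = a k / ((((∑ j, ‖a j‖ ^ 2) + σ ^ 2) : ℝ) : ℂ)) :
    Real.log (1 + SINR) =
      (⨆ u : ℂ, ⨆ w : Set.Ioi (0 : ℝ), (Real.log w - (w : ℝ) * MSE u + 1)) ∧
    Real.log (1 / MSE ustar) - (1 / MSE ustar) * MSE ustar + 1 = Real.log (1 + SINR) := by
  set Q := (∑ j ∈ Finset.univ.erase k, ‖a j‖ ^ 2) + σ ^ 2
  have hQ : 0 < Q := by positivity
  have hT : 0 < ‖a k‖ ^ 2 + Q := by positivity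
  have hustar' : ustar = a k / ((‖a k‖ ^ 2 + Q : ℝ) : ℂ) := by
    rw [hustar, ← Finset.add_sum_erase _ _ (Finset.mem_univ k), add_assoc]
  have hMSE' : ∀ u, MSE u = (‖a k‖ ^ 2 + Q) * ‖u - ustar‖ ^ 2 + Q / (‖a k‖ ^ 2 + Q) := by
    intro u
    rw [hustar', ← Complex.norm_one_sub_conj_mul_sq_add_mul_norm_sq _ _ hT.ne', hMSE]
    simp only [norm_mul, Complex.norm_conj, mul_pow, ← Finset.mul_sum, Q]
    ring
  have hMSE_ustar : MSE ustar = Q / (‖a k‖ ^ 2 + Q) := by simp [hMSE']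
  have hmin : ∀ u, MSE ustar ≤ MSE u := fun u ↦ by
    rw [hMSE_ustar, hMSE']; exact le_add_of_nonneg_left (by positivity)
  have hrate : Real.log (1 + SINR) = -Real.log (MSE ustar) := by
    rw [hSINR, hMSE_ustar, Real.log_one_add_div hQ]
  have hMSE_ustar_pos : 0 < MSE ustar := hMSE_ustar ▸ div_pos hQ hT
  rw [hrate, Real.iSup_iSup_log_sub_mul_add_one_of_forall_le hMSE_ustar_pos hmin,
    Real.log_one_div_sub_one_div_mul_add_one hMSE_ustar_pos.ne']
  exact ⟨rfl, rfl⟩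

/-- The rate–WMMSE variational representation:
`log(1 + SINR) = sup_{u ∈ ℂ} sup_{w > 0} (log w − w·MSE(u) + 1)`,
attained at `u* = a_k/(∑ j |a j|² + σ²)` and `w* = 1/MSE(u*)`. -/
theorem stmt_15 (K : ℕ) (hK : 0 < K) (a : Fin K → ℂ) (σ : ℝ) (hσ : 0 < σ) (k : Fin K)
    (MSE : ℂ → ℝ)
    (hMSE : ∀ u : ℂ, MSE u =
      ‖1 - (starRingEnd ℂ u) * a k‖ ^ 2 +
        (∑ j ∈ Finset.univ.erase k, ‖(starRingEnd ℂ u) * a j‖ ^ 2) +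
        σ ^ 2 * ‖u‖ ^ 2)
    (SINR : ℝ)
    (hSINR : SINR =
      ‖a k‖ ^ 2 / ((∑ j ∈ Finset.univ.erase k, ‖a j‖ ^ 2) + σ ^ 2))
    (ustar : ℂ)
    (hustar : ustar = a k / ((((∑ j, ‖a j‖ ^ 2) + σ ^ 2) : ℝ) : ℂ)) :
    Real.log (1 + SINR) =
      (⨆ u : ℂ, ⨆ w : Set.Ioi (0 : ℝ), (Real.log w - (w : ℝ) * MSE u + 1)) ∧
    Real.log (1 / MSE ustar) - (1 / MSE ustar) * MSE ustar + 1 = Real.log (1 + SINR) :=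
  stmt_15_general K a σ hσ k MSE hMSE SINR hSINR ustar hustar
end
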